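/- arXiv:2501.17385 — 3 statements merged into one kernel-verified Lean document; each statement's English description precedes it below -/
import Mathlib

section
/- Suppose f_j(1) > 0 for every j ∈ {1,…,k}. Then PoA(f,w,𝓒,𝓝) = 1/W°, where W° is the supremum, over all games G ∈ 𝓖, all pure Nash equilibria a of G satisfying W(a) = 1, and all action profiles b of G, of the value W(b). -/
open Finset

noncomputable section

/-- A resource allocation game with `n` agents: resources `Fin m`, nonnegative
resource values `v`, and nonempty finite action sets consisting of subsets of resources. -/
structure RAGame (n : ℕ) where
  m : ℕ
  v : Fin m → ℝ
  v_nonneg : ∀ r, 0 ≤ v r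
  act : Fin n → Finset (Finset (Fin m))
  act_nonempty : ∀ i, (act i).Nonempty

namespace RAGame

variable {n : ℕ}

/-- the number of agents in `S` selecting resource `r` at profile `a` -/
def cnt (G : RAGame n) (a : Fin n → Finset (Fin G.m)) (S : Finset (Fin n)) (r : Fin G.m) : ℕ :=
  (S.filter fun i => r ∈ a i).card

/-- `a` is an action profile of the game -/
def IsProfile (G : RAGame n) (a : Fin n → Finset (Fin G.m)) : Prop := ∀ i, a i ∈ G.act i

/-- the welfare `W(a) = ∑ r, v r * w (|a|_r)` -/
def welf (G : RAGame n) (w : ℕ → ℝ) (a : Fin n → Finset (Fin G.m)) : ℝ :=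
  ∑ r, G.v r * w (G.cnt a Finset.univ r)

end RAGame

/-- a basis function: `w 0 = 0` and `w j > 0` for `1 ≤ j ≤ n` -/
def IsBasis (n : ℕ) (w : ℕ → ℝ) : Prop :=
  w 0 = 0 ∧ ∀ j, 1 ≤ j → j ≤ n → 0 < w j

/-- An information network on `n` agents partitioned into `k` (nonempty) classes, namely
the fibers of `cls` (`cls` surjective says every class is nonempty), where each agent of
class `j` observes exactly the agents in `Nb j`;  `Nb j` contains the class `j` itself
and is a union of classes. -/
structure Network (n k : ℕ) where
  cls : Fin n → Fin k
  Nb : Fin k → Finset (Fin n)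
  cls_surj : Function.Surjective cls
  mem_Nb : ∀ i, i ∈ Nb (cls i)
  Nb_union : ∀ (j : Fin k) (i i' : Fin n), cls i = cls i' → i ∈ Nb j → i' ∈ Nb j

namespace Network

variable {n k : ℕ}

/-- the class `𝓒_j` as a finset of agents -/
def classSet (net : Network n k) (j : Fin k) : Finset (Fin n) :=
  Finset.univ.filter fun i => net.cls i = j

/-- `κ j = |𝓒_j|` -/
def κ (net : Network n k) (j : Fin k) : ℕ := (net.classSet j).card

end Network

/-- `f` is a utility mechanism for the network: `f_j 0 = f_j (|𝓝_j|+1) = 0` -/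
def IsMech {n k : ℕ} (net : Network n k) (f : Fin k → ℕ → ℝ) : Prop :=
  ∀ j, f j 0 = 0 ∧ f j ((net.Nb j).card + 1) = 0

namespace RAGame

variable {n k : ℕ}

/-- the utility `U_i(a) = ∑_{r ∈ a i} v r * f_{cls i} (|a|_r^{𝓝_{cls i}})` -/
def util (G : RAGame n) (net : Network n k) (f : Fin k → ℕ → ℝ)
    (a : Fin n → Finset (Fin G.m)) (i : Fin n) : ℝ :=
  ∑ r ∈ a i, G.v r * f (net.cls i) (G.cnt a (net.Nb (net.cls i)) r)

/-- `a` is a pure Nash equilibrium -/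
def IsNash (G : RAGame n) (net : Network n k) (f : Fin k → ℕ → ℝ)
    (a : Fin n → Finset (Fin G.m)) : Prop :=
  G.IsProfile a ∧ ∀ (i : Fin n), ∀ b ∈ G.act i,
    G.util net f (Function.update a i b) i ≤ G.util net f a i

end RAGame

/-- the defining condition of the class `𝓖`: some profile has positive welfare -/
def GoodGame {n : ℕ} (G : RAGame n) (w : ℕ → ℝ) : Prop :=
  ∃ a, G.IsProfile a ∧ 0 < G.welf w a

/-- (worst pure-equilibrium welfare) / (best welfare) of a single game -/
def gameRatio {n k : ℕ} (G : RAGame n) (w : ℕ → ℝ) (net : Network n k)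
    (f : Fin k → ℕ → ℝ) : ℝ :=
  sInf {x | ∃ a, G.IsNash net f a ∧ x = G.welf w a} /
    sSup {x | ∃ a, G.IsProfile a ∧ x = G.welf w a}

/-- the price of anarchy `PoA(f, w, 𝓒, 𝓝)` -/
def PoA (n : ℕ) {k : ℕ} (w : ℕ → ℝ) (net : Network n k) (f : Fin k → ℕ → ℝ) : ℝ :=
  sInf {q | ∃ G : RAGame n, GoodGame G w ∧ (∃ a, G.IsNash net f a) ∧
    q = gameRatio G w net f}

/-- index tuples `t = ((a_j, x_j, b_j))_{j ∈ [k]}` (components of size at most `n`) -/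
abbrev Idx (n k : ℕ) := Fin k → Fin (n + 1) × Fin (n + 1) × Fin (n + 1)

section IdxDefs

variable {n k : ℕ}

def aI (t : Idx n k) (j : Fin k) : ℕ := ((t j).1 : ℕ)
def xI (t : Idx n k) (j : Fin k) : ℕ := ((t j).2.1 : ℕ)
def bI (t : Idx n k) (j : Fin k) : ℕ := ((t j).2.2 : ℕ)

/-- `A_t = ∑_j (a_j + x_j)` -/
def AtI (t : Idx n k) : ℕ := ∑ j, (aI t j + xI t j)

/-- `B_t = ∑_j (b_j + x_j)` -/
def BtI (t : Idx n k) : ℕ := ∑ j, (bI t j + xI t j)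

/-- `A_{t,j} = ∑_{l : 𝓒_l ⊆ 𝓝_j} (a_l + x_l)` -/
def Atj (net : Network n k) (t : Idx n k) (j : Fin k) : ℕ :=
  ∑ l ∈ Finset.univ.filter (fun l => net.classSet l ⊆ net.Nb j), (aI t l + xI t l)

end IdxDefs

/-- the index set `𝓘` -/
def Iset (n k : ℕ) (κ : Fin k → ℕ) : Finset (Idx n k) :=
  Finset.univ.filter fun t =>
    (∀ j, aI t j + xI t j + bI t j ≤ κ j) ∧
    1 ≤ ∑ j, (aI t j + xI t j + bI t j) ∧
    ∑ j, (aI t j + xI t j + bI t j) ≤ n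

/-- the reduced index set `𝓘_R` -/
def IRset (n k : ℕ) (κ : Fin k → ℕ) : Finset (Idx n k) :=
  (Iset n k κ).filter fun t =>
    ∀ j, aI t j * xI t j * bI t j = 0 ∨ aI t j + xI t j + bI t j = κ j

section LP

variable {n k : ℕ}

/-- the primal LP objective `∑_{t ∈ 𝓘} w(B_t) θ(t)` for `θ : 𝓘 → ℝ` -/
def primalObj (n k : ℕ) (κ : Fin k → ℕ) (w : ℕ → ℝ)
    (θ : {t : Idx n k // t ∈ Iset n k κ} → ℝ) : ℝ :=
  ∑ t ∈ (Iset n k κ).attach, w (BtI t.1) * θ t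

/-- feasibility for the primal LP -/
def PrimalFeasible (n k : ℕ) (net : Network n k) (w : ℕ → ℝ) (f : Fin k → ℕ → ℝ)
    (θ : {t : Idx n k // t ∈ Iset n k net.κ} → ℝ) : Prop :=
  (∀ t, 0 ≤ θ t) ∧
  (∀ j : Fin k, 0 ≤ ∑ t ∈ (Iset n k net.κ).attach,
      ((aI t.1 j : ℝ) * f j (Atj net t.1 j) - (bI t.1 j : ℝ) * f j (Atj net t.1 j + 1)) * θ t) ∧
  ∑ t ∈ (Iset n k net.κ).attach, w (AtI t.1) * θ t = 1

/-- the set of primal objective values at feasible points; `W* = sSup` of this set -/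
def PrimalVals (n k : ℕ) (net : Network n k) (w : ℕ → ℝ) (f : Fin k → ℕ → ℝ) : Set ℝ :=
  {x | ∃ θ, PrimalFeasible n k net w f θ ∧ x = primalObj n k net.κ w θ}

/-- the dual LP constraint associated to index `t` -/
def DualConstr (net : Network n k) (w : ℕ → ℝ) (f : Fin k → ℕ → ℝ)
    (lam : Fin k → ℝ) (μ : ℝ) (t : Idx n k) : Prop :=
  w (BtI t) +
      ∑ j, lam j * ((aI t j : ℝ) * f j (Atj net t j) - (bI t j : ℝ) * f j (Atj net t j + 1))
    ≤ μ * w (AtI t)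

/-- the set of dual-feasible values `μ`; `V* = sInf` of this set -/
def DualSet (n k : ℕ) (net : Network n k) (w : ℕ → ℝ) (f : Fin k → ℕ → ℝ) : Set ℝ :=
  {μ | ∃ lam : Fin k → ℝ, (∀ j, 0 ≤ lam j) ∧ ∀ t ∈ IRset n k net.κ, DualConstr net w f lam μ t}

/-- feasibility for the LP deriving the optimal mechanism (`λ` folded into `f`) -/
def DesignFeas (n k : ℕ) (net : Network n k) (w : ℕ → ℝ) (f : Fin k → ℕ → ℝ) (μ : ℝ) : Prop :=
  IsMech net f ∧ ∀ t ∈ IRset n k net.κ,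
    w (BtI t) + ∑ j, ((aI t j : ℝ) * f j (Atj net t j) - (bI t j : ℝ) * f j (Atj net t j + 1))
      ≤ μ * w (AtI t)

end LP

section Theta

variable {n k : ℕ}

/-- `𝓡(t)`: the resources whose selection signature at `(a^ne, a^opt)` is `t` -/
def Rt (G : RAGame n) (net : Network n k) (ane aopt : Fin n → Finset (Fin G.m))
    (t : Idx n k) : Finset (Fin G.m) :=
  Finset.univ.filter fun r =>
    ∀ j : Fin k,
      G.cnt ane (net.classSet j) r = aI t j + xI t j ∧
      G.cnt aopt (net.classSet j) r = bI t j + xI t j ∧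
      ((net.classSet j).filter fun i => r ∈ ane i ∧ r ∈ aopt i).card = xI t j

/-- `θ(t) = ∑_{r ∈ 𝓡(t)} v r` -/
def θof (G : RAGame n) (net : Network n k) (ane aopt : Fin n → Finset (Fin G.m))
    (t : Idx n k) : ℝ :=
  ∑ r ∈ Rt G net ane aopt t, G.v r

end Theta

section Blind

variable {n : ℕ}

/-- utility in the blind network: blind agents (members of `B`) observe only themselves -/
def blindUtil (G : RAGame n) (B : Finset (Fin n)) (fbl : ℝ) (fnbl : ℕ → ℝ)
    (a : Fin n → Finset (Fin G.m)) (i : Fin n) : ℝ :=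
  if i ∈ B then ∑ r ∈ a i, G.v r * fbl
  else ∑ r ∈ a i, G.v r * fnbl (G.cnt a Finset.univ r)

/-- pure Nash equilibrium in the blind network -/
def IsBlindNash (G : RAGame n) (B : Finset (Fin n)) (fbl : ℝ) (fnbl : ℕ → ℝ)
    (a : Fin n → Finset (Fin G.m)) : Prop :=
  G.IsProfile a ∧ ∀ (i : Fin n), ∀ b ∈ G.act i,
    blindUtil G B fbl fnbl (Function.update a i b) i ≤ blindUtil G B fbl fnbl a i

/-- the price of anarchy for the blind network with blind agents `B` -/
def blindPoA (n : ℕ) (w : ℕ → ℝ) (B : Finset (Fin n)) (fbl : ℝ) (fnbl : ℕ → ℝ) : ℝ :=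
  sInf {q | ∃ G : RAGame n, GoodGame G w ∧ (∃ a, IsBlindNash G B fbl fnbl a) ∧
    q = sInf {x | ∃ a, IsBlindNash G B fbl fnbl a ∧ x = G.welf w a} /
        sSup {x | ∃ a, G.IsProfile a ∧ x = G.welf w a}}

/-- a triple `(a, x, b)` with entries of size at most `n` -/
abbrev Trip (n : ℕ) := Fin (n + 1) × Fin (n + 1) × Fin (n + 1)

def ta1 (t : Trip n × Trip n) : ℕ := (t.1.1 : ℕ)
def tx1 (t : Trip n × Trip n) : ℕ := (t.1.2.1 : ℕ)
def tb1 (t : Trip n × Trip n) : ℕ := (t.1.2.2 : ℕ)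
def ta2 (t : Trip n × Trip n) : ℕ := (t.2.1 : ℕ)
def tx2 (t : Trip n × Trip n) : ℕ := (t.2.2.1 : ℕ)
def tb2 (t : Trip n × Trip n) : ℕ := (t.2.2.2 : ℕ)

/-- `A_t` for the two-class (blind) network; also equals `A_{t,2}` -/
def At2 (t : Trip n × Trip n) : ℕ := ta1 t + tx1 t + ta2 t + tx2 t

/-- `B_t` for the two-class (blind) network -/
def Bt2 (t : Trip n × Trip n) : ℕ := tb1 t + tx1 t + tb2 t + tx2 t

end Blind

/-- the index set `𝓘` for the two-class (blind) network with `κ` blind agents -/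
def I2 (n κ : ℕ) : Finset (Trip n × Trip n) :=
  Finset.univ.filter fun t =>
    ta1 t + tx1 t + tb1 t ≤ κ ∧ ta2 t + tx2 t + tb2 t ≤ n - κ ∧
    1 ≤ ta1 t + tx1 t + tb1 t + (ta2 t + tx2 t + tb2 t) ∧
    ta1 t + tx1 t + tb1 t + (ta2 t + tx2 t + tb2 t) ≤ n

/-- the reduced index set `𝓘_R` for the two-class (blind) network -/
def IR2 (n κ : ℕ) : Finset (Trip n × Trip n) :=
  (I2 n κ).filter fun t =>
    (ta1 t * tx1 t * tb1 t = 0 ∨ ta1 t + tx1 t + tb1 t = κ) ∧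
    (ta2 t * tx2 t * tb2 t = 0 ∨ ta2 t + tx2 t + tb2 t = n - κ)

section BlindLP

variable {n : ℕ}

/-- the dual LP constraint for the blind network at index `t` -/
def BlindDualConstr (w : ℕ → ℝ) (fnbl : ℕ → ℝ) (l1 l2 μ : ℝ) (t : Trip n × Trip n) : Prop :=
  w (Bt2 t) + l1 * ((ta1 t : ℝ) - (tb1 t : ℝ)) +
      l2 * ((ta2 t : ℝ) * fnbl (At2 t) - (tb2 t : ℝ) * fnbl (At2 t + 1))
    ≤ μ * w (At2 t)

/-- the set of dual-feasible values `μ` for the blind network; `V* = sInf` of this set -/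
def BlindDualSet (n κ : ℕ) (w : ℕ → ℝ) (fnbl : ℕ → ℝ) : Set ℝ :=
  {μ | ∃ l1 l2 : ℝ, 0 ≤ l1 ∧ 0 ≤ l2 ∧ ∀ t ∈ IR2 n κ, BlindDualConstr w fnbl l1 l2 μ t}

/-- feasibility for the optimal-design LP of the blind network -/
def BlindDesignFeas (n κ : ℕ) (w : ℕ → ℝ) (fnbl : ℕ → ℝ) (μ : ℝ) : Prop :=
  fnbl 0 = 0 ∧ fnbl (n + 1) = 0 ∧ ∃ l : ℝ, 0 ≤ l ∧ ∀ t ∈ IR2 n κ,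
    w (Bt2 t) + l * ((ta1 t : ℝ) - (tb1 t : ℝ)) + (ta2 t : ℝ) * fnbl (At2 t)
      - (tb2 t : ℝ) * fnbl (At2 t + 1) ≤ μ * w (At2 t)

/-- `𝓡(t)` for the two-class blind network with blind agents `B` -/
def Rt2 (G : RAGame n) (B : Finset (Fin n)) (ane aopt : Fin n → Finset (Fin G.m))
    (t : Trip n × Trip n) : Finset (Fin G.m) :=
  Finset.univ.filter fun r =>
    G.cnt ane B r = ta1 t + tx1 t ∧ G.cnt aopt B r = tb1 t + tx1 t ∧
    (B.filter fun i => r ∈ ane i ∧ r ∈ aopt i).card = tx1 t ∧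
    G.cnt ane Bᶜ r = ta2 t + tx2 t ∧ G.cnt aopt Bᶜ r = tb2 t + tx2 t ∧
    (Bᶜ.filter fun i => r ∈ ane i ∧ r ∈ aopt i).card = tx2 t

/-- `θ(t)` for the two-class blind network -/
def θof2 (G : RAGame n) (B : Finset (Fin n)) (ane aopt : Fin n → Finset (Fin G.m))
    (t : Trip n × Trip n) : ℝ :=
  ∑ r ∈ Rt2 G B ane aopt t, G.v r

end BlindLP

/-- the potential function `G_j(a) = ∑_r v_r ∑_{l=1}^{|a|_r^{𝓝_j}} f_j(l)` -/
def potentialG {n k : ℕ} (G : RAGame n) (net : Network n k) (f : Fin k → ℕ → ℝ)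
    (j : Fin k) (a : Fin n → Finset (Fin G.m)) : ℝ :=
  ∑ r, G.v r * ∑ l ∈ Finset.Icc 1 (G.cnt a (net.Nb j) r), f j l

/-- the potential `G_1(a) = ∑_r v_r |a|_r^{bl}` for the class of blind agents `B` -/
def blindPotential {n : ℕ} (G : RAGame n) (B : Finset (Fin n))
    (a : Fin n → Finset (Fin G.m)) : ℝ :=
  ∑ r, G.v r * (G.cnt a B r : ℝ)

/-- the game with every resource value scaled by `c ≥ 0` -/
def RAGame.scale {n : ℕ} (G : RAGame n) (c : ℝ) (hc : 0 ≤ c) : RAGame n :=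
  ⟨G.m, fun r => c * G.v r, fun r => mul_nonneg hc (G.v_nonneg r), G.act, G.act_nonempty⟩

/-- the game with the same resources but the action set of each agent `i`
restricted to `{a i, b i}` -/
def RAGame.restrictTwo {n : ℕ} (G : RAGame n) (a b : Fin n → Finset (Fin G.m)) : RAGame n :=
  ⟨G.m, G.v, G.v_nonneg, fun i => {a i, b i}, fun i => ⟨a i, by simp⟩⟩

end

/-!
Scaling all resource values of a game by `1 / W(a)`, for its worst equilibrium `a`, leaves the
equilibria and the game's ratio unchanged and normalizes `W(a)` to `1`; this is possible because
`f_j(1) > 0` forces equilibria of games in `𝓖` to have positive welfare. Hence every game ratio is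
`1 / W(b)` for a normalized welfare `W(b)`, and conversely every positive normalized welfare `x`
bounds the ratio of its game by `1 / x`, which pins `PoA` to `1 / W°`.
-/

/-- Also covers unbounded `S`: then `sSup S = 0` by convention and the infimum of `Q` is `0`. -/
theorem Real.sInf_eq_inv_sSup_of_forall_exists {Q S : Set ℝ} (hS : ∀ x ∈ S, 0 ≤ x)
    (hQS : ∀ q ∈ Q, ∃ x ∈ S, 0 < x ∧ q = x⁻¹) (hSQ : ∀ x ∈ S, 0 < x → ∃ q ∈ Q, q ≤ x⁻¹) :
    sInf Q = (sSup S)⁻¹ := by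
  have hQ : ∀ q ∈ Q, 0 < q := fun q hq => by
    obtain ⟨x, -, hx, rfl⟩ := hQS q hq
    exact inv_pos.2 hx
  have hQbdd : BddBelow Q := ⟨0, fun q hq => (hQ q hq).le⟩
  have hS_le : 0 < sInf Q → ∀ x ∈ S, x ≤ (sInf Q)⁻¹ := fun hm x hx => by
    rcases (hS x hx).eq_or_lt with rfl | hx0
    · positivity
    obtain ⟨q, hq, hqx⟩ := hSQ x hx hx0
    exact (le_inv_comm₀ hm hx0).1 ((csInf_le hQbdd hq).trans hqx)
  rcases Q.eq_empty_or_nonempty with rfl | ⟨q₀, hq₀⟩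
  · have hS0 : ∀ x ∈ S, x ≤ 0 := fun x hx => not_lt.1 fun hx0 => by
      obtain ⟨q, hq, -⟩ := hSQ x hx hx0
      exact hq
    rw [Real.sInf_empty, le_antisymm (Real.sSup_nonpos hS0) (Real.sSup_nonneg hS), inv_zero]
  by_cases hSbdd : BddAbove S
  · obtain ⟨x₀, hx₀, hx₀pos, -⟩ := hQS q₀ hq₀
    have hs : 0 < sSup S := hx₀pos.trans_le (le_csSup hSbdd hx₀)
    have hm : (sSup S)⁻¹ ≤ sInf Q := le_csInf ⟨q₀, hq₀⟩ fun q hq => by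
      obtain ⟨x, hx, hx0, rfl⟩ := hQS q hq
      exact inv_anti₀ hx0 (le_csSup hSbdd hx)
    have hm0 : 0 < sInf Q := (inv_pos.2 hs).trans_le hm
    exact hm.antisymm' ((le_inv_comm₀ hs hm0).1 (csSup_le ⟨x₀, hx₀⟩ (hS_le hm0)))
  · rw [Real.sSup_of_not_bddAbove hSbdd, inv_zero]
    refine (Real.sInf_nonneg fun q hq => (hQ q hq).le).antisymm' (not_lt.1 fun hm => ?_)
    exact hSbdd ⟨_, hS_le hm⟩

namespace RAGame

variable {n k : ℕ}

theorem cnt_le (G : RAGame n) (a : Fin n → Finset (Fin G.m)) (S : Finset (Fin n))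
    (r : Fin G.m) : G.cnt a S r ≤ n :=
  (card_filter_le _ _).trans (card_le_univ S |>.trans_eq (Fintype.card_fin n))

theorem basis_cnt_nonneg {w : ℕ → ℝ} (hw : IsBasis n w) (G : RAGame n)
    (a : Fin n → Finset (Fin G.m)) (S : Finset (Fin n)) (r : Fin G.m) :
    0 ≤ w (G.cnt a S r) := by
  rcases Nat.eq_zero_or_pos (G.cnt a S r) with h | h
  · rw [h, hw.1]
  · exact (hw.2 _ h (G.cnt_le a S r)).le

theorem welf_nonneg {w : ℕ → ℝ} (hw : IsBasis n w) (G : RAGame n)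
    (a : Fin n → Finset (Fin G.m)) : 0 ≤ G.welf w a :=
  sum_nonneg fun r _ => mul_nonneg (G.v_nonneg r) (basis_cnt_nonneg hw G a univ r)

theorem exists_mem_of_welf_pos {w : ℕ → ℝ} (hw0 : w 0 = 0) {G : RAGame n}
    {a : Fin n → Finset (Fin G.m)} (h : 0 < G.welf w a) : ∃ i r, r ∈ a i ∧ 0 < G.v r := by
  obtain ⟨r, -, hr⟩ := exists_lt_of_sum_lt (by simpa [welf] using h : ∑ _r : Fin G.m, (0 : ℝ) < _)
  have hv : 0 < G.v r := (G.v_nonneg r).lt_of_ne fun h0 => by simp [← h0] at hr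
  have hc : G.cnt a univ r ≠ 0 := fun h0 => by simp [h0, hw0] at hr
  obtain ⟨i, hi⟩ := card_pos.1 (Nat.pos_of_ne_zero hc)
  exact ⟨i, r, (mem_filter.1 hi).2, hv⟩

theorem not_mem_of_welf_eq_zero {w : ℕ → ℝ} (hw : IsBasis n w) {G : RAGame n}
    {a : Fin n → Finset (Fin G.m)} (h : G.welf w a = 0) {r : Fin G.m} (hv : 0 < G.v r)
    (i : Fin n) : r ∉ a i := by
  intro hri
  have hc : 0 < G.cnt a univ r := card_pos.2 ⟨i, mem_filter.2 ⟨mem_univ i, hri⟩⟩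
  have hterm := (sum_eq_zero_iff_of_nonneg fun r _ =>
    mul_nonneg (G.v_nonneg r) (basis_cnt_nonneg hw G a univ r)).1 h r (mem_univ r)
  exact (mul_pos hv (hw.2 _ hc (G.cnt_le a univ r))).ne' hterm

theorem util_eq_zero_of_welf_eq_zero {w : ℕ → ℝ} (hw : IsBasis n w) {G : RAGame n}
    {a : Fin n → Finset (Fin G.m)} (h : G.welf w a = 0) (net : Network n k)
    (f : Fin k → ℕ → ℝ) (i : Fin n) : G.util net f a i = 0 := by
  refine sum_eq_zero fun r hr => ?_
  have hv : G.v r = 0 :=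
    ((G.v_nonneg r).eq_of_not_lt fun hv => not_mem_of_welf_eq_zero hw h hv i hr).symm
  rw [hv, zero_mul]

theorem cnt_update_eq_one {G : RAGame n} {a : Fin n → Finset (Fin G.m)} {r : Fin G.m}
    (hr : ∀ i, r ∉ a i) {S : Finset (Fin n)} {i : Fin n} (hi : i ∈ S)
    {c : Finset (Fin G.m)} (hc : r ∈ c) : G.cnt (Function.update a i c) S r = 1 := by
  refine card_eq_one.2 ⟨i, eq_singleton_iff_unique_mem.2 ⟨?_, fun i' hi' => ?_⟩⟩
  · simpa using ⟨hi, hc⟩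
  · by_contra hne
    rw [mem_filter, Function.update_of_ne hne] at hi'
    exact hr i' hi'.2

theorem util_update_pos {G : RAGame n} {net : Network n k} {f : Fin k → ℕ → ℝ}
    {a : Fin n → Finset (Fin G.m)} {i : Fin n} {c : Finset (Fin G.m)}
    (hf : 0 < f (net.cls i) 1) (hfree : ∀ r ∈ c, 0 < G.v r → ∀ i', r ∉ a i')
    {r : Fin G.m} (hr : r ∈ c) (hv : 0 < G.v r) :
    0 < G.util net f (Function.update a i c) i := by
  have hterm : ∀ r ∈ c, 0 < G.v r → 0 < G.v r *
      f (net.cls i) (G.cnt (Function.update a i c) (net.Nb (net.cls i)) r) := fun r hr hv => by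
    rw [cnt_update_eq_one (hfree r hr hv) (net.mem_Nb i) hr]
    exact mul_pos hv hf
  rw [util, Function.update_self]
  refine sum_pos' (fun r' hr' => ?_) ⟨r, hr, hterm r hr hv⟩
  rcases (G.v_nonneg r').eq_or_lt with h0 | hv'
  · rw [← h0, zero_mul]
  · exact (hterm r' hr' hv').le

/-- If the equilibrium welfare were `0`, every valuable resource would be free, and the agent
that uses one in a profile of positive welfare would gain by deviating to it, as `f_j(1) > 0`. -/
theorem IsNash.welf_pos {w : ℕ → ℝ} (hw : IsBasis n w) {G : RAGame n} (hG : GoodGame G w)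
    {net : Network n k} {f : Fin k → ℕ → ℝ} (hf : ∀ j, 0 < f j 1)
    {a : Fin n → Finset (Fin G.m)} (ha : G.IsNash net f a) : 0 < G.welf w a := by
  refine (welf_nonneg hw G a).lt_of_ne' fun h0 => ?_
  obtain ⟨p, hp, hpw⟩ := hG
  obtain ⟨i, r, hr, hv⟩ := exists_mem_of_welf_pos hw.1 hpw
  have hdev := ha.2 i (p i) (hp i)
  rw [util_eq_zero_of_welf_eq_zero hw h0] at hdev
  exact (util_update_pos (hf _) (fun r' _ hv' => not_mem_of_welf_eq_zero hw h0 hv') hr hv).not_ge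
    hdev

theorem scale_welf (G : RAGame n) {c : ℝ} (hc : 0 ≤ c) (w : ℕ → ℝ)
    (a : Fin n → Finset (Fin G.m)) : (G.scale c hc).welf w a = c * G.welf w a := by
  simp only [welf, mul_sum]
  exact sum_congr rfl fun r _ => mul_assoc _ _ _

theorem scale_util (G : RAGame n) {c : ℝ} (hc : 0 ≤ c) (net : Network n k)
    (f : Fin k → ℕ → ℝ) (a : Fin n → Finset (Fin G.m)) (i : Fin n) :
    (G.scale c hc).util net f a i = c * G.util net f a i := by
  simp only [util, mul_sum]
  exact sum_congr rfl fun r _ => mul_assoc _ _ _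

theorem IsNash.scale {G : RAGame n} {net : Network n k} {f : Fin k → ℕ → ℝ}
    {a : Fin n → Finset (Fin G.m)} (ha : G.IsNash net f a) {c : ℝ} (hc : 0 ≤ c) :
    (G.scale c hc).IsNash net f a :=
  ⟨ha.1, fun i b hb => (scale_util G hc net f _ i).trans_le
    ((mul_le_mul_of_nonneg_left (ha.2 i b hb) hc).trans_eq (scale_util G hc net f a i).symm)⟩

theorem finite_welf_image (G : RAGame n) (w : ℕ → ℝ) (P : (Fin n → Finset (Fin G.m)) → Prop) :
    {x | ∃ a, P a ∧ x = G.welf w a}.Finite :=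
  (Set.finite_range (G.welf w)).subset <| by
    rintro _ ⟨a, -, rfl⟩
    exact ⟨a, rfl⟩

theorem gameRatio_le_div {w : ℕ → ℝ} (hw : IsBasis n w) {G : RAGame n} {net : Network n k}
    {f : Fin k → ℕ → ℝ} {a b : Fin n → Finset (Fin G.m)} (ha : G.IsNash net f a)
    (hb : G.IsProfile b) (hb0 : 0 < G.welf w b) :
    gameRatio G w net f ≤ G.welf w a / G.welf w b :=
  div_le_div₀ (welf_nonneg hw G a) (csInf_le (G.finite_welf_image w _).bddBelow ⟨a, ha, rfl⟩)
    hb0 (le_csSup (G.finite_welf_image w _).bddAbove ⟨b, hb, rfl⟩)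

theorem exists_gameRatio_eq_div {w : ℕ → ℝ} {G : RAGame n} {net : Network n k}
    {f : Fin k → ℕ → ℝ} (hN : ∃ a, G.IsNash net f a) :
    ∃ a, G.IsNash net f a ∧ ∃ b, G.IsProfile b ∧
      (∀ p, G.IsProfile p → G.welf w p ≤ G.welf w b) ∧
      gameRatio G w net f = G.welf w a / G.welf w b := by
  obtain ⟨a₀, ha₀⟩ := hN
  have hNne : {x | ∃ a, G.IsNash net f a ∧ x = G.welf w a}.Nonempty := ⟨_, a₀, ha₀, rfl⟩
  have hPne : {x | ∃ b, G.IsProfile b ∧ x = G.welf w b}.Nonempty := ⟨_, a₀, ha₀.1, rfl⟩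
  obtain ⟨a, ha, hamin⟩ := hNne.csInf_mem (G.finite_welf_image w _)
  obtain ⟨b, hb, hbmax⟩ := hPne.csSup_mem (G.finite_welf_image w _)
  refine ⟨a, ha, b, hb, fun p hp => ?_, by rw [gameRatio, hamin, hbmax]⟩
  exact hbmax ▸ le_csSup (G.finite_welf_image w _).bddAbove ⟨p, hp, rfl⟩

theorem exists_normalized_gameRatio_eq_inv {w : ℕ → ℝ} (hw : IsBasis n w) {G : RAGame n}
    (hG : GoodGame G w) {net : Network n k} {f : Fin k → ℕ → ℝ} (hf : ∀ j, 0 < f j 1)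
    (hN : ∃ a, G.IsNash net f a) :
    ∃ G' : RAGame n, GoodGame G' w ∧ ∃ a, G'.IsNash net f a ∧ G'.welf w a = 1 ∧
      ∃ b, G'.IsProfile b ∧ 0 < G'.welf w b ∧ gameRatio G w net f = (G'.welf w b)⁻¹ := by
  obtain ⟨a, ha, b, hb, hbmax, hratio⟩ := exists_gameRatio_eq_div (w := w) hN
  have ha0 := ha.welf_pos hw hG hf
  have hb0 : 0 < G.welf w b := by
    obtain ⟨p, hp, hpw⟩ := hG
    exact hpw.trans_le (hbmax p hp)
  have hc : 0 ≤ (G.welf w a)⁻¹ := inv_nonneg.2 ha0.le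
  have hb0' : 0 < (G.scale _ hc).welf w b := by
    rw [scale_welf]
    positivity
  refine ⟨G.scale _ hc, ⟨b, hb, hb0'⟩, a, ha.scale hc, ?_, b, hb, hb0', ?_⟩
  · rw [scale_welf, inv_mul_cancel₀ ha0.ne']
  · rw [hratio, scale_welf, mul_inv, inv_inv, div_eq_mul_inv, mul_comm]

end RAGame

theorem poa_eq_inv_sup_over_normalized_games_general {n k : ℕ} (w : ℕ → ℝ) (hw : IsBasis n w)
    (net : Network n k) (f : Fin k → ℕ → ℝ)
    (hfpos : ∀ j, 0 < f j 1) :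
    PoA n w net f = 1 / sSup {x | ∃ G : RAGame n, GoodGame G w ∧
      ∃ a, G.IsNash net f a ∧ G.welf w a = 1 ∧
        ∃ b, G.IsProfile b ∧ x = G.welf w b} := by
  rw [PoA, one_div]
  apply Real.sInf_eq_inv_sSup_of_forall_exists
  · rintro x ⟨G, -, -, -, -, b, -, rfl⟩
    exact G.welf_nonneg hw b
  · rintro q ⟨G, hG, hN, rfl⟩
    obtain ⟨G', hG', a, ha, ha1, b, hb, hb0, hq⟩ :=
      RAGame.exists_normalized_gameRatio_eq_inv hw hG hfpos hN
    exact ⟨_, ⟨G', hG', a, ha, ha1, b, hb, rfl⟩, hb0, hq⟩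
  · rintro x ⟨G, hG, a, ha, ha1, b, hb, rfl⟩ hb0
    refine ⟨_, ⟨G, hG, ⟨a, ha⟩, rfl⟩, ?_⟩
    simpa only [ha1, one_div] using RAGame.gameRatio_le_div hw ha hb hb0

/-- if `f_j(1) > 0` for all `j`, then `PoA = 1/W°`, where `W°` is the supremum
of `W(b)` over games in `𝓖`, pure Nash equilibria with `W = 1`, and profiles `b`. -/
theorem poa_eq_inv_sup_over_normalized_games {n k : ℕ} (w : ℕ → ℝ) (hw : IsBasis n w)
    (net : Network n k) (f : Fin k → ℕ → ℝ) (hf : IsMech net f)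
    (hfpos : ∀ j, 0 < f j 1) :
    PoA n w net f = 1 / sSup {x | ∃ G : RAGame n, GoodGame G w ∧
      ∃ a, G.IsNash net f a ∧ G.welf w a = 1 ∧
        ∃ b, G.IsProfile b ∧ x = G.welf w b} :=
  poa_eq_inv_sup_over_normalized_games_general w hw net f hfpos
end

section
/- Suppose f_j(1) > 0 for every j ∈ {1,…,k}. Then the feasible set of the primal LP (the set of θ : 𝓘 → ℝ with θ(t) ≥ 0, Σ_{t∈𝓘} [a_j f_j(A_{t,j}) − b_j f_j(A_{t,j}+1)] θ(t) ≥ 0 for every j, and Σ_{t∈𝓘} w(A_t) θ(t) = 1) is nonempty and compact; in particular the supremum W* of Σ_{t∈𝓘} w(B_t) θ(t) over this set is finite and attained. -/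
open Finset

/-!
The feasible set is cut out by finitely many closed linear conditions, so only boundedness needs
an argument. Subtracting a small multiple `ε` of the summed incentive constraints from the
normalisation weight `w(A_t)` leaves a strictly positive weight `g(t)`: where `A_t ≥ 1` because
`w(A_t) > 0`, and where `A_t = 0` because then the summed constraint is `-∑ b_j f_j(1) < 0`.
Every feasible `θ` satisfies `∑ g θ ≤ 1`, hence `θ(t) ≤ 1 / g(t)`. A feasible point is the
mass `1 / w(1)` on the index with one agent in both profiles (`x_j = 1`), whose constraint
coefficients all vanish.
-/

open Filter Topology

theorem exists_pos_forall_pos_sub_mul {ι : Type*} [Finite ι] {u v : ι → ℝ}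
    (h : ∀ t, 0 < u t ∨ (u t = 0 ∧ v t < 0)) : ∃ ε > 0, ∀ t, 0 < u t - ε * v t := by
  have hev (t : ι) : ∀ᶠ ε in 𝓝[>] (0 : ℝ), 0 < u t - ε * v t := by
    rcases h t with hu | ⟨hu, hv⟩
    · have hlim : Tendsto (fun ε => u t - ε * v t) (𝓝 0) (𝓝 (u t)) := by
        simpa using (by fun_prop : Continuous fun ε : ℝ => u t - ε * v t).tendsto 0
      exact (hlim.mono_left nhdsWithin_le_nhds).eventually (lt_mem_nhds hu)
    · filter_upwards [self_mem_nhdsWithin] with ε (hε : 0 < ε)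
      nlinarith
  obtain ⟨ε, hε, hεpos⟩ := (eventually_mem_nhdsWithin.and (eventually_all.2 hev)).exists
  exact ⟨ε, hε, hεpos⟩

section LinearProgram

variable {ι J : Type*} [Fintype ι]

def lpFeasibleSet (c : J → ι → ℝ) (w : ι → ℝ) : Set (ι → ℝ) :=
  {θ | (∀ t, 0 ≤ θ t) ∧ (∀ j, 0 ≤ ∑ t, c j t * θ t) ∧ ∑ t, w t * θ t = 1}

theorem isClosed_lpFeasibleSet (c : J → ι → ℝ) (w : ι → ℝ) : IsClosed (lpFeasibleSet c w) := by
  have hdot (u : ι → ℝ) : Continuous fun θ : ι → ℝ => ∑ t, u t * θ t := by fun_prop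
  simp only [lpFeasibleSet, Set.ofPred_and, Set.ofPred_forall]
  exact (isClosed_iInter fun t => isClosed_le continuous_const (continuous_apply t)).inter
    ((isClosed_iInter fun j => isClosed_le continuous_const (hdot _)).inter
      (isClosed_eq (hdot w) continuous_const))

theorem pi_single_mem_lpFeasibleSet [DecidableEq ι] {c : J → ι → ℝ} {w : ι → ℝ} {i : ι}
    (hc : ∀ j, 0 ≤ c j i) (hw : 0 < w i) : (Pi.single i (w i)⁻¹ : ι → ℝ) ∈ lpFeasibleSet c w := by
  have hsum (u : ι → ℝ) : ∑ t, u t * (Pi.single i (w i)⁻¹ : ι → ℝ) t = u i * (w i)⁻¹ := by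
    simp [Pi.single_apply]
  refine ⟨fun t => ?_, fun j => ?_, ?_⟩
  · rcases eq_or_ne t i with rfl | h
    · simpa using hw.le
    · simp [h]
  · rw [hsum]
    exact mul_nonneg (hc j) (inv_nonneg.2 hw.le)
  · rw [hsum, mul_inv_cancel₀ hw.ne']

/-- With `g := w - ∑ j, y j • c j`, feasibility gives `∑ g θ = 1 - ∑ j, y j ⟪c j, θ⟫ ≤ 1`. -/
theorem lpFeasibleSet_subset_pi_Icc [Fintype J] {c : J → ι → ℝ} {w : ι → ℝ} {y : J → ℝ}
    (hy : ∀ j, 0 ≤ y j) (hg : ∀ t, 0 < w t - ∑ j, y j * c j t) :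
    lpFeasibleSet c w ⊆ Set.univ.pi fun t => Set.Icc 0 (w t - ∑ j, y j * c j t)⁻¹ := by
  rintro θ ⟨hθ, hc, hw⟩ t -
  set g := fun t => w t - ∑ j, y j * c j t with hg_def
  have hsum : ∑ s, g s * θ s = 1 - ∑ j, y j * ∑ s, c j s * θ s := by
    simp only [hg_def, sub_mul, Finset.sum_sub_distrib, hw, Finset.sum_mul, Finset.mul_sum,
      mul_assoc]
    rw [Finset.sum_comm]
  have hle : g t * θ t ≤ 1 := calc
    g t * θ t ≤ ∑ s, g s * θ s :=
      Finset.single_le_sum (fun s _ => mul_nonneg (hg s).le (hθ s)) (Finset.mem_univ t)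
    _ ≤ 1 := by
      rw [hsum]
      linarith [Finset.sum_nonneg fun j (_ : j ∈ Finset.univ) => mul_nonneg (hy j) (hc j)]
  exact ⟨hθ t, by rw [inv_eq_one_div, le_div_iff₀ (hg t)]; linarith⟩

theorem isCompact_lpFeasibleSet [Fintype J] {c : J → ι → ℝ} {w : ι → ℝ}
    (h : ∀ t, 0 < w t ∨ (w t = 0 ∧ ∑ j, c j t < 0)) : IsCompact (lpFeasibleSet c w) := by
  obtain ⟨ε, hε, hpos⟩ := exists_pos_forall_pos_sub_mul h
  have hg : ∀ t, 0 < w t - ∑ j, ε * c j t := by simpa only [← Finset.mul_sum] using hpos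
  exact (isCompact_univ_pi fun _ => isCompact_Icc).of_isClosed_subset
    (isClosed_lpFeasibleSet c w) (lpFeasibleSet_subset_pi_Icc (fun _ => hε.le) hg)

end LinearProgram

theorem Network.one_le_κ {n k : ℕ} (net : Network n k) (j : Fin k) : 1 ≤ net.κ j := by
  obtain ⟨i, hi⟩ := net.cls_surj j
  exact Finset.card_pos.2 ⟨i, by simp [Network.classSet, hi]⟩

section PrimalLP

variable {n k : ℕ}

def constrCoeff (net : Network n k) (f : Fin k → ℕ → ℝ) (j : Fin k) (t : Idx n k) : ℝ :=
  (aI t j : ℝ) * f j (Atj net t j) - (bI t j : ℝ) * f j (Atj net t j + 1)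

theorem primalFeasible_iff {net : Network n k} {w : ℕ → ℝ} {f : Fin k → ℕ → ℝ}
    {θ : {t : Idx n k // t ∈ Iset n k net.κ} → ℝ} :
    PrimalFeasible n k net w f θ ↔
      θ ∈ lpFeasibleSet (fun j t => constrCoeff net f j t.1) (fun t => w (AtI t.1)) := by
  simp only [PrimalFeasible, lpFeasibleSet, constrCoeff, Finset.univ_eq_attach, Set.mem_ofPred_eq]

theorem AtI_le_of_mem_Iset {κ : Fin k → ℕ} {t : Idx n k} (ht : t ∈ Iset n k κ) : AtI t ≤ n := by
  simp only [Iset, Finset.mem_filter] at ht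
  calc AtI t ≤ ∑ j, (aI t j + xI t j + bI t j) := Finset.sum_le_sum fun j _ => by omega
    _ ≤ n := ht.2.2.2

/-- Every coefficient is `-b_j f_j(1)` here, and some `b_j` is positive. -/
theorem sum_constrCoeff_neg_of_AtI_eq_zero {net : Network n k} {f : Fin k → ℕ → ℝ}
    (hfpos : ∀ j, 0 < f j 1) {κ : Fin k → ℕ} {t : Idx n k} (ht : t ∈ Iset n k κ)
    (hA : AtI t = 0) : ∑ j, constrCoeff net f j t < 0 := by
  have hax : ∀ j, aI t j + xI t j = 0 := fun j => Finset.sum_eq_zero_iff.1 hA j (mem_univ j)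
  have hAtj : ∀ j, Atj net t j = 0 := fun j => Finset.sum_eq_zero fun l _ => hax l
  have hcoeff : ∀ j, constrCoeff net f j t = -((bI t j : ℝ) * f j 1) := fun j => by
    simp [constrCoeff, hAtj j, show aI t j = 0 by have := hax j; omega]
  obtain ⟨j₁, hj₁⟩ : ∃ j, 1 ≤ bI t j := by
    simp only [Iset, Finset.mem_filter] at ht
    by_contra! hb
    have : ∑ j, (aI t j + xI t j + bI t j) = 0 :=
      Finset.sum_eq_zero fun j _ => by have := hax j; have := hb j; omega
    omega
  simp only [hcoeff, Finset.sum_neg_distrib, neg_lt_zero]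
  refine Finset.sum_pos' (fun j _ => mul_nonneg (Nat.cast_nonneg _) (hfpos j).le)
    ⟨j₁, mem_univ j₁, mul_pos (by exact_mod_cast hj₁) (hfpos j₁)⟩

theorem weight_pos_or_sum_constrCoeff_neg {w : ℕ → ℝ} (hw : IsBasis n w) {net : Network n k}
    {f : Fin k → ℕ → ℝ} (hfpos : ∀ j, 0 < f j 1) {κ : Fin k → ℕ} {t : Idx n k}
    (ht : t ∈ Iset n k κ) : 0 < w (AtI t) ∨ (w (AtI t) = 0 ∧ ∑ j, constrCoeff net f j t < 0) := by
  rcases Nat.eq_zero_or_pos (AtI t) with hA | hA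
  · exact .inr ⟨hA ▸ hw.1, sum_constrCoeff_neg_of_AtI_eq_zero hfpos ht hA⟩
  · exact .inl (hw.2 _ hA (AtI_le_of_mem_Iset ht))

theorem aI_single (j l : Fin k) : aI (Pi.single j (0, 1, 0) : Idx n k) l = 0 := by
  rcases eq_or_ne l j with rfl | h <;> simp [aI, *]

theorem bI_single (j l : Fin k) : bI (Pi.single j (0, 1, 0) : Idx n k) l = 0 := by
  rcases eq_or_ne l j with rfl | h <;> simp [bI, *]

theorem xI_single (hn : 1 ≤ n) (j l : Fin k) :
    xI (Pi.single j (0, 1, 0) : Idx n k) l = if l = j then 1 else 0 := by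
  rcases eq_or_ne l j with rfl | h
  · simp [xI, Nat.mod_eq_of_lt (show 1 < n + 1 by omega)]
  · simp [xI, h]

theorem single_mem_Iset (hn : 1 ≤ n) {κ : Fin k → ℕ} {j : Fin k} (hκ : 1 ≤ κ j) :
    (Pi.single j (0, 1, 0) : Idx n k) ∈ Iset n k κ := by
  simp only [Iset, Finset.mem_filter, Finset.mem_univ, true_and, aI_single, bI_single,
    xI_single hn, zero_add, add_zero, Finset.sum_ite_eq', if_true]
  refine ⟨fun l => ?_, le_rfl, hn⟩
  split_ifs with h
  · exact h ▸ hκ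
  · exact Nat.zero_le _

theorem AtI_single (hn : 1 ≤ n) (j : Fin k) : AtI (Pi.single j (0, 1, 0) : Idx n k) = 1 := by
  simp [AtI, aI_single, xI_single hn]

theorem constrCoeff_single (net : Network n k) (f : Fin k → ℕ → ℝ) (j l : Fin k) :
    constrCoeff net f l (Pi.single j (0, 1, 0)) = 0 := by
  simp [constrCoeff, aI_single, bI_single]

theorem exists_primalFeasible (hn : 1 ≤ n) {w : ℕ → ℝ} (hw : IsBasis n w) (net : Network n k)
    (f : Fin k → ℕ → ℝ) : ∃ θ, PrimalFeasible n k net w f θ := by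
  obtain ⟨j⟩ : Nonempty (Fin k) := ⟨net.cls ⟨0, hn⟩⟩
  have hmem := pi_single_mem_lpFeasibleSet
    (c := fun l (t : {t : Idx n k // t ∈ Iset n k net.κ}) => constrCoeff net f l t.1)
    (w := fun t => w (AtI t.1)) (i := ⟨_, single_mem_Iset hn (net.one_le_κ j)⟩)
    (fun l => (constrCoeff_single net f j l).ge) (by simpa [AtI_single hn] using hw.2 1 le_rfl hn)
  exact ⟨_, primalFeasible_iff.2 hmem⟩

end PrimalLP

theorem primal_feasible_compact_general {n k : ℕ} (hn : 1 ≤ n) (w : ℕ → ℝ) (hw : IsBasis n w)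
    (net : Network n k) (f : Fin k → ℕ → ℝ)
    (hfpos : ∀ j, 0 < f j 1) :
    {θ | PrimalFeasible n k net w f θ}.Nonempty ∧
    IsCompact {θ | PrimalFeasible n k net w f θ} ∧
    ∃ θ₀, PrimalFeasible n k net w f θ₀ ∧
      (∀ θ, PrimalFeasible n k net w f θ →
        primalObj n k net.κ w θ ≤ primalObj n k net.κ w θ₀) ∧
      sSup (PrimalVals n k net w f) = primalObj n k net.κ w θ₀ := by
  have hset : {θ | PrimalFeasible n k net w f θ} =
      lpFeasibleSet (fun j t => constrCoeff net f j t.1) (fun t => w (AtI t.1)) :=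
    Set.ext fun _ => primalFeasible_iff
  have hne : {θ | PrimalFeasible n k net w f θ}.Nonempty := exists_primalFeasible hn hw net f
  have hcpt : IsCompact {θ | PrimalFeasible n k net w f θ} := by
    rw [hset]
    exact isCompact_lpFeasibleSet fun t => weight_pos_or_sum_constrCoeff_neg hw hfpos t.2
  have hobj : Continuous (primalObj n k net.κ w) :=
    continuous_finsetSum _ fun t _ => continuous_const.mul (continuous_apply t)
  obtain ⟨θ₀, hθ₀, hmax⟩ := hcpt.exists_isMaxOn hne hobj.continuousOn
  refine ⟨hne, hcpt, θ₀, hθ₀, fun θ hθ => hmax hθ, ?_⟩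
  exact IsGreatest.csSup_eq ⟨⟨θ₀, hθ₀, rfl⟩, by rintro _ ⟨θ, hθ, rfl⟩; exact hmax hθ⟩

/-- if `f_j(1) > 0` for all `j`, the primal feasible set is nonempty and compact;
in particular the supremum `W*` of the LP objective is finite and attained. -/
theorem primal_feasible_compact {n k : ℕ} (hn : 1 ≤ n) (w : ℕ → ℝ) (hw : IsBasis n w)
    (net : Network n k) (f : Fin k → ℕ → ℝ) (hf : IsMech net f)
    (hfpos : ∀ j, 0 < f j 1) :
    {θ | PrimalFeasible n k net w f θ}.Nonempty ∧
    IsCompact {θ | PrimalFeasible n k net w f θ} ∧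
    ∃ θ₀, PrimalFeasible n k net w f θ₀ ∧
      (∀ θ, PrimalFeasible n k net w f θ →
        primalObj n k net.κ w θ ≤ primalObj n k net.κ w θ₀) ∧
      sSup (PrimalVals n k net w f) = primalObj n k net.κ w θ₀ :=
  primal_feasible_compact_general hn w hw net f hfpos
end

section
/- Let G be a resource allocation game with network (𝓒,𝓝) and mechanism f, let a^ne and a^opt be any two action profiles, and let θ : 𝓘 → ℝ be constructed from (a^ne, a^opt) as in the context. Then for every class index j ∈ {1,…,k}: Σ_{i∈𝓒_j} U_i(a^ne) = Σ_{t∈𝓘} (a_j + x_j) f_j(A_{t,j}) θ(t), and Σ_{i∈𝓒_j} U_i(a^opt_i, a^ne_{-i}) = Σ_{t∈𝓘} [x_j f_j(A_{t,j}) + b_j f_j(A_{t,j}+1)] θ(t). -/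
open Finset

/-!
Each resource `r` has a selection signature: for every class `l`, the numbers of agents of
`𝓒_l` choosing `r` only at `a^ne`, at both profiles, and only at `a^opt`. The sets `𝓡(t)` are
exactly the fibres of the signature map, so a `θ`-weighted sum over `𝓘` is a `v`-weighted sum
over resources (resources outside `⋃ 𝓡(t)` are chosen by nobody and have signature `0`).
Summing the utilities of class `j` and swapping the sums over agents and resources, `r`
contributes `v_r f_j(|a^ne|_r^{𝓝_j})` once per agent of `𝓒_j` using it, and the observed load
`|a^ne|_r^{𝓝_j}` is `A_{t,j}` for the signature `t` of `r`. An agent deviating to `a^opt_i`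
raises the load of `r ∈ a^opt_i` by one exactly when `r ∉ a^ne_i`.
-/

namespace Network

variable {n k : ℕ} (net : Network n k)

theorem cls_eq_of_mem_classSet {i : Fin n} {j : Fin k} (h : i ∈ net.classSet j) :
    net.cls i = j :=
  (mem_filter.mp h).2

theorem sum_κ : ∑ l, net.κ l = n := by
  simpa [κ, classSet] using
    (card_eq_sum_card_fiberwise (f := net.cls) (s := univ) (t := univ)
      fun i _ => mem_univ (net.cls i)).symm

theorem filter_classSet_subset_Nb_eq_filter_Nb (p : Fin n → Prop) [DecidablePred p]
    (j l : Fin k) (h : net.classSet l ⊆ net.Nb j) :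
    {i ∈ net.classSet l | p i} = {i ∈ net.Nb j | p i ∧ net.cls i = l} := by
  ext i
  simp only [classSet, mem_filter, mem_univ, true_and]
  exact ⟨fun ⟨hl, hp⟩ => ⟨h (by simpa [classSet] using hl), hp, hl⟩,
    fun ⟨_, hp, hl⟩ => ⟨hl, hp⟩⟩

theorem filter_Nb_cls_eq_empty (p : Fin n → Prop) [DecidablePred p]
    (j l : Fin k) (h : ¬ net.classSet l ⊆ net.Nb j) :
    {i ∈ net.Nb j | p i ∧ net.cls i = l} = ∅ := by
  refine filter_eq_empty_iff.mpr fun i hi ⟨_, hl⟩ => h fun i' hi' => ?_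
  simp only [classSet, mem_filter, mem_univ, true_and] at hi'
  exact net.Nb_union j i i' (hl.trans hi'.symm) hi

theorem card_filter_Nb (p : Fin n → Prop) [DecidablePred p] (j : Fin k) :
    #{i ∈ net.Nb j | p i} =
      ∑ l with net.classSet l ⊆ net.Nb j, #{i ∈ net.classSet l | p i} := by
  rw [card_eq_sum_card_fiberwise (f := net.cls) (t := univ) fun i _ => mem_univ _,
    ← sum_filter_add_sum_filter_not univ fun l => net.classSet l ⊆ net.Nb j]
  simp only [filter_filter]
  have hout : ∑ l with ¬ net.classSet l ⊆ net.Nb j, #{i ∈ net.Nb j | p i ∧ net.cls i = l} = 0 :=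
    sum_eq_zero fun l hl => by
      rw [net.filter_Nb_cls_eq_empty p j l (mem_filter.mp hl).2, card_empty]
  rw [hout, add_zero]
  exact sum_congr rfl fun l hl =>
    congrArg card (net.filter_classSet_subset_Nb_eq_filter_Nb p j l (mem_filter.mp hl).2).symm

end Network

namespace RAGame

variable {n k : ℕ} (G : RAGame n)

theorem cnt_Nb (net : Network n k) (a : Fin n → Finset (Fin G.m)) (j : Fin k) (r : Fin G.m) :
    G.cnt a (net.Nb j) r = ∑ l with net.classSet l ⊆ net.Nb j, G.cnt a (net.classSet l) r :=
  net.card_filter_Nb _ j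

theorem cnt_update_of_mem {a : Fin n → Finset (Fin G.m)} {i : Fin n} {b : Finset (Fin G.m)}
    {S : Finset (Fin n)} (hi : i ∈ S) {r : Fin G.m} (hr : r ∈ b) :
    G.cnt (Function.update a i b) S r = G.cnt a S r + if r ∈ a i then 0 else 1 := by
  unfold cnt
  split_ifs with h
  · congr 1
    ext i'
    by_cases hii : i' = i <;> simp [hii, h, hr]
  · rw [← card_insert_of_notMem (show i ∉ {i' ∈ S | r ∈ a i'} by simp [h])]
    congr 1
    ext i'
    by_cases hii : i' = i <;> simp [hii, h, hr, hi]

end RAGame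

def cardFin {n : ℕ} (s : Finset (Fin n)) : Fin (n + 1) :=
  ⟨#s, Nat.lt_succ_of_le ((card_le_univ s).trans_eq (Fintype.card_fin n))⟩

section Signature

variable {n k : ℕ} (G : RAGame n) (net : Network n k) (ane aopt : Fin n → Finset (Fin G.m))

def selectionSignature (r : Fin G.m) : Idx n k := fun l =>
  (cardFin {i ∈ net.classSet l | r ∈ ane i ∧ r ∉ aopt i},
   cardFin {i ∈ net.classSet l | r ∈ ane i ∧ r ∈ aopt i},
   cardFin {i ∈ net.classSet l | r ∉ ane i ∧ r ∈ aopt i})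

local notation "σ" => selectionSignature G net ane aopt

theorem xI_selectionSignature (r : Fin G.m) (l : Fin k) :
    xI (σ r) l = #{i ∈ net.classSet l | r ∈ ane i ∧ r ∈ aopt i} := rfl

theorem bI_selectionSignature (r : Fin G.m) (l : Fin k) :
    bI (σ r) l = #{i ∈ net.classSet l | r ∉ ane i ∧ r ∈ aopt i} := rfl

theorem aI_add_xI_selectionSignature (r : Fin G.m) (l : Fin k) :
    aI (σ r) l + xI (σ r) l = G.cnt ane (net.classSet l) r := by
  change #{i ∈ net.classSet l | r ∈ ane i ∧ r ∉ aopt i} +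
    #{i ∈ net.classSet l | r ∈ ane i ∧ r ∈ aopt i} = #{i ∈ net.classSet l | r ∈ ane i}
  rw [← card_filter_add_card_filter_not (s := {i ∈ net.classSet l | r ∈ ane i})
    (fun i => r ∉ aopt i), filter_filter, filter_filter]
  simp only [not_not]

theorem bI_add_xI_selectionSignature (r : Fin G.m) (l : Fin k) :
    bI (σ r) l + xI (σ r) l = G.cnt aopt (net.classSet l) r := by
  change #{i ∈ net.classSet l | r ∉ ane i ∧ r ∈ aopt i} +
    #{i ∈ net.classSet l | r ∈ ane i ∧ r ∈ aopt i} = #{i ∈ net.classSet l | r ∈ aopt i}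
  rw [← card_filter_add_card_filter_not (s := {i ∈ net.classSet l | r ∈ aopt i})
    (fun i => r ∉ ane i), filter_filter, filter_filter]
  simp only [not_not, and_comm]

theorem aI_add_xI_add_bI_selectionSignature_le (r : Fin G.m) (l : Fin k) :
    aI (σ r) l + xI (σ r) l + bI (σ r) l ≤ net.κ l := by
  rw [aI_add_xI_selectionSignature]
  calc G.cnt ane (net.classSet l) r + bI (σ r) l
      = #({i ∈ net.classSet l | r ∈ ane i} ∪ {i ∈ net.classSet l | r ∉ ane i ∧ r ∈ aopt i}) :=
        (card_union_of_disjoint (disjoint_filter.mpr fun _ _ h h' => h'.1 h)).symm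
    _ ≤ net.κ l := card_le_card (union_subset (filter_subset _ _) (filter_subset _ _))

theorem mem_Rt_iff {r : Fin G.m} {t : Idx n k} : r ∈ Rt G net ane aopt t ↔ σ r = t := by
  rw [Rt, mem_filter, and_iff_right (mem_univ r)]
  constructor
  · intro h
    funext l
    obtain ⟨ha, hb, hx⟩ := h l
    have hax := aI_add_xI_selectionSignature G net ane aopt r l
    have hbx := bI_add_xI_selectionSignature G net ane aopt r l
    rw [← xI_selectionSignature] at hx
    refine Prod.ext (Fin.ext ?_) (Prod.ext (Fin.ext hx) (Fin.ext ?_))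
    · change aI (σ r) l = aI t l
      omega
    · change bI (σ r) l = bI t l
      omega
  · rintro rfl l
    exact ⟨(aI_add_xI_selectionSignature G net ane aopt r l).symm,
      (bI_add_xI_selectionSignature G net ane aopt r l).symm, rfl⟩

theorem selectionSignature_eq_zero_of_notMem_Iset {r : Fin G.m}
    (hr : σ r ∉ Iset n k net.κ) : σ r = 0 := by
  have hle : ∑ l, (aI (σ r) l + xI (σ r) l + bI (σ r) l) ≤ n :=
    (sum_le_sum fun l _ => aI_add_xI_add_bI_selectionSignature_le G net ane aopt r l).trans_eq
      net.sum_κ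
  have hzero : ∑ l, (aI (σ r) l + xI (σ r) l + bI (σ r) l) = 0 := by
    by_contra h
    exact hr (mem_filter.mpr ⟨mem_univ _,
      fun l => aI_add_xI_add_bI_selectionSignature_le G net ane aopt r l, by omega, hle⟩)
  funext l
  have hl := sum_eq_zero_iff.mp hzero l (mem_univ l)
  refine Prod.ext (Fin.ext ?_) (Prod.ext (Fin.ext ?_) (Fin.ext ?_))
  all_goals
    simp only [Pi.zero_apply, Prod.fst_zero, Prod.snd_zero, Fin.val_zero]
    simp only [aI, xI, bI] at hl
    omega

theorem sum_Iset_mul_θof (g : Idx n k → ℝ) (hg : g 0 = 0) :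
    ∑ t ∈ Iset n k net.κ, g t * θof G net ane aopt t = ∑ r, g (σ r) * G.v r := by
  have hRt : ∀ t, Rt G net ane aopt t = ({r | σ r = t} : Finset _) := fun t => by
    ext r
    rw [mem_Rt_iff, mem_filter, and_iff_right (mem_univ r)]
  calc ∑ t ∈ Iset n k net.κ, g t * θof G net ane aopt t
      = ∑ t ∈ Iset n k net.κ, ∑ r with σ r = t, g (σ r) * G.v r := by
        refine sum_congr rfl fun t _ => ?_
        rw [θof, hRt, mul_sum]
        exact sum_congr rfl fun r hr => by rw [(mem_filter.mp hr).2]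
    _ = ∑ r with σ r ∈ Iset n k net.κ, g (σ r) * G.v r := sum_fiberwise_eq_sum_filter _ _ _ _
    _ = ∑ r, g (σ r) * G.v r := sum_filter_of_ne fun r _ h => by
        by_contra hr
        rw [selectionSignature_eq_zero_of_notMem_Iset G net ane aopt hr, hg, zero_mul] at h
        exact h rfl

theorem Atj_selectionSignature (r : Fin G.m) (j : Fin k) :
    Atj net (σ r) j = G.cnt ane (net.Nb j) r := by
  rw [G.cnt_Nb]
  exact sum_congr rfl fun l _ => aI_add_xI_selectionSignature G net ane aopt r l

theorem sum_classSet_util (f : Fin k → ℕ → ℝ) (j : Fin k) :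
    ∑ i ∈ net.classSet j, G.util net f ane i =
      ∑ r, ((aI (σ r) j + xI (σ r) j : ℕ) : ℝ) * f j (Atj net (σ r) j) * G.v r := by
  calc ∑ i ∈ net.classSet j, G.util net f ane i
      = ∑ i ∈ net.classSet j, ∑ r ∈ ane i, G.v r * f j (G.cnt ane (net.Nb j) r) :=
        sum_congr rfl fun i hi => by rw [RAGame.util, net.cls_eq_of_mem_classSet hi]
    _ = ∑ r, ∑ i ∈ net.classSet j with r ∈ ane i, G.v r * f j (G.cnt ane (net.Nb j) r) :=
        sum_comm' fun _ _ => by simp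
    _ = _ := sum_congr rfl fun r _ => by
        rw [sum_const, nsmul_eq_mul, aI_add_xI_selectionSignature, Atj_selectionSignature]
        unfold RAGame.cnt
        ring

theorem sum_classSet_util_update (f : Fin k → ℕ → ℝ) (j : Fin k) :
    ∑ i ∈ net.classSet j, G.util net f (Function.update ane i (aopt i)) i =
      ∑ r, ((xI (σ r) j : ℝ) * f j (Atj net (σ r) j) +
        (bI (σ r) j : ℝ) * f j (Atj net (σ r) j + 1)) * G.v r := by
  calc ∑ i ∈ net.classSet j, G.util net f (Function.update ane i (aopt i)) i
      = ∑ i ∈ net.classSet j, ∑ r ∈ aopt i, if r ∈ ane i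
          then G.v r * f j (G.cnt ane (net.Nb j) r)
          else G.v r * f j (G.cnt ane (net.Nb j) r + 1) :=
        sum_congr rfl fun i hi => by
          rw [RAGame.util, net.cls_eq_of_mem_classSet hi, Function.update_self]
          refine sum_congr rfl fun r hr => ?_
          rw [G.cnt_update_of_mem (net.cls_eq_of_mem_classSet hi ▸ net.mem_Nb i) hr]
          split_ifs <;> simp
    _ = ∑ r, ∑ i ∈ net.classSet j with r ∈ aopt i, if r ∈ ane i
          then G.v r * f j (G.cnt ane (net.Nb j) r)
          else G.v r * f j (G.cnt ane (net.Nb j) r + 1) :=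
        sum_comm' fun _ _ => by simp
    _ = _ := sum_congr rfl fun r _ => by
        rw [sum_ite, sum_const, sum_const, filter_filter, filter_filter,
          xI_selectionSignature, bI_selectionSignature, Atj_selectionSignature]
        simp only [nsmul_eq_mul, and_comm]
        ring

end Signature

theorem class_utility_via_theta_general {n k : ℕ} (G : RAGame n) (net : Network n k)
    (f : Fin k → ℕ → ℝ)
    (ane aopt : Fin n → Finset (Fin G.m)) (j : Fin k) :
    (∑ i ∈ net.classSet j, G.util net f ane i) =
      ∑ t ∈ Iset n k net.κ,
        ((aI t j + xI t j : ℕ) : ℝ) * f j (Atj net t j) * θof G net ane aopt t ∧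
    (∑ i ∈ net.classSet j, G.util net f (Function.update ane i (aopt i)) i) =
      ∑ t ∈ Iset n k net.κ,
        ((xI t j : ℝ) * f j (Atj net t j) + (bI t j : ℝ) * f j (Atj net t j + 1)) *
          θof G net ane aopt t := by
  refine ⟨(sum_classSet_util G net ane aopt f j).trans ?_,
    (sum_classSet_util_update G net ane aopt f j).trans ?_⟩
  · exact (sum_Iset_mul_θof G net ane aopt
      (fun t => ((aI t j + xI t j : ℕ) : ℝ) * f j (Atj net t j)) (by simp [aI, xI])).symm
  · exact (sum_Iset_mul_θof G net ane aopt
      (fun t => (xI t j : ℝ) * f j (Atj net t j) + (bI t j : ℝ) * f j (Atj net t j + 1))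
      (by simp [xI, bI])).symm

/-- class-aggregated utilities at `a^ne` and at unilateral deviations to
`a^opt`, expressed through `θ` built from the pair. -/
theorem class_utility_via_theta {n k : ℕ} (G : RAGame n) (net : Network n k)
    (f : Fin k → ℕ → ℝ) (hf : IsMech net f)
    (ane aopt : Fin n → Finset (Fin G.m))
    (hane : G.IsProfile ane) (haopt : G.IsProfile aopt) (j : Fin k) :
    (∑ i ∈ net.classSet j, G.util net f ane i) =
      ∑ t ∈ Iset n k net.κ,
        ((aI t j + xI t j : ℕ) : ℝ) * f j (Atj net t j) * θof G net ane aopt t ∧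
    (∑ i ∈ net.classSet j, G.util net f (Function.update ane i (aopt i)) i) =
      ∑ t ∈ Iset n k net.κ,
        ((xI t j : ℝ) * f j (Atj net t j) + (bI t j : ℝ) * f j (Atj net t j + 1)) *
          θof G net ane aopt t :=
  class_utility_via_theta_general G net f ane aopt j
end
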